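/- Let $r\ge 2$ be an integer, $(w_1,\dots,w_n)$ positive reals with sum $W$, and let $Y$ be the size-biased weight variable ($\mathbb{P}[Y\le a]=\sum_{u:w_u\le a}w_u/W$). Let $\psi_H>0$ be such that $\mathbb{P}[y\le Y<\psi_H] < 2W^{r-1}/y^{2r-1}$ for all $0<y<\psi_H$. Then for any integer $\vartheta$ with $r\le \vartheta\le 2r-1$ and any $a>0$, $\sum_{v: a\le w_v<\psi_H} w_v^{\vartheta} \le 4r\,W^r\,a^{\vartheta-2r}$. -/

import Mathlib

/-!
Write `T(x) = weightTail S w x = ∑_{x ≤ w_v, v ∈ S} w_v` (that is `W · ℙ[x ≤ Y, Y ∈ S]`) for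
`S = {v | a ≤ w_v < ψH}`. Since `w^ϑ = a^(ϑ-1) w + (ϑ-1) w ∫_a^w x^(ϑ-2) dx`, summing over `S` gives
the layer-cake identity `∑_S w_v^ϑ = a^(ϑ-1) T(a) + (ϑ-1) ∫_a^ψH x^(ϑ-2) T(x) dx`.
The tail hypothesis says `T(x) ≤ 2 W^r x^(1-2r)`, and `ϑ ≤ 2r - 1` makes `x^(ϑ-2r-1)` integrable
on `[a, ∞)`, so the right side is at most `2 W^r a^(ϑ-2r) (1 + (ϑ-1)/(2r-ϑ)) ≤ 4 r W^r a^(ϑ-2r)`.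
-/

open Finset MeasureTheory intervalIntegral

noncomputable def weightTail {ι : Type*} (s : Finset ι) (w : ι → ℝ) (x : ℝ) : ℝ :=
  ∑ v ∈ s with x ≤ w v, w v

lemma intervalIntegrable_indicator_Iic_pow (c : ℝ) (p : ℕ) (a b : ℝ) :
    IntervalIntegrable ((Set.Iic c).indicator (· ^ p)) volume a b :=
  intervalIntegrable_iff.mpr
    (((continuous_pow p).intervalIntegrable a b).def'.indicator measurableSet_Iic)

lemma integral_indicator_Iic_pow {a b c : ℝ} (hac : a ≤ c) (hcb : c ≤ b) (p : ℕ) :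
    ∫ x in a..b, (Set.Iic c).indicator (· ^ p) x = (c ^ (p + 1) - a ^ (p + 1)) / (p + 1) := by
  rw [← integral_add_adjacent_intervals (intervalIntegrable_indicator_Iic_pow c p a c)
    (intervalIntegrable_indicator_Iic_pow c p c b)]
  have hleft : ∫ x in a..c, (Set.Iic c).indicator (· ^ p) x = ∫ x in a..c, x ^ p :=
    integral_congr fun x hx => Set.indicator_of_mem (Set.uIcc_of_le hac ▸ hx).2 _
  have hright : ∫ x in c..b, (Set.Iic c).indicator (· ^ p) x = 0 := by
    rw [intervalIntegral.integral_congr_ae (g := fun _ => (0 : ℝ)) ?_,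
      intervalIntegral.integral_zero]
    refine Filter.Eventually.of_forall fun x hx => ?_
    rw [Set.uIoc_of_le hcb] at hx
    exact Set.indicator_of_notMem (s := Set.Iic c) (not_le.mpr hx.1) (· ^ p)
  rw [hleft, hright, integral_pow, add_zero]

section LayerCake

variable {ι : Type*} (s : Finset ι) (w : ι → ℝ)

lemma pow_mul_weightTail (p : ℕ) (x : ℝ) :
    x ^ p * weightTail s w x = ∑ v ∈ s, w v * (Set.Iic (w v)).indicator (· ^ p) x := by
  rw [weightTail, sum_filter, mul_sum]
  refine sum_congr rfl fun v _ => ?_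
  by_cases h : x ≤ w v <;> simp [h, mul_comm]

lemma intervalIntegrable_pow_mul_weightTail (p : ℕ) (a b : ℝ) :
    IntervalIntegrable (fun x => x ^ p * weightTail s w x) volume a b := by
  have h := IntervalIntegrable.sum s fun v _ =>
    (intervalIntegrable_indicator_Iic_pow (w v) p a b).const_mul (w v)
  simpa only [Finset.sum_fn, pow_mul_weightTail] using h

variable {s w} {a b : ℝ}

lemma integral_pow_mul_weightTail (hs : ∀ v ∈ s, a ≤ w v ∧ w v ≤ b) (p : ℕ) :
    ∫ x in a..b, x ^ p * weightTail s w x =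
      ∑ v ∈ s, w v * ((w v ^ (p + 1) - a ^ (p + 1)) / (p + 1)) := by
  simp_rw [pow_mul_weightTail]
  rw [integral_finsetSum fun v _ => (intervalIntegrable_indicator_Iic_pow (w v) p a b).const_mul _]
  refine sum_congr rfl fun v hv => ?_
  rw [intervalIntegral.integral_const_mul, integral_indicator_Iic_pow (hs v hv).1 (hs v hv).2]

lemma sum_pow_add_two_eq (hs : ∀ v ∈ s, a ≤ w v ∧ w v ≤ b) (p : ℕ) :
    ∑ v ∈ s, w v ^ (p + 2) =
      a ^ (p + 1) * weightTail s w a + (p + 1) * ∫ x in a..b, x ^ p * weightTail s w x := by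
  have hall : weightTail s w a = ∑ v ∈ s, w v :=
    sum_congr (filter_true_of_mem fun v hv => (hs v hv).1) fun _ _ => rfl
  rw [integral_pow_mul_weightTail hs, hall, mul_sum, mul_sum, ← sum_add_distrib]
  refine sum_congr rfl fun v _ => ?_
  field_simp
  ring

end LayerCake

lemma integral_zpow_sub_one_le {a b : ℝ} (ha : 0 < a) (hab : a ≤ b) {k : ℤ} (hk : k < 0) :
    ∫ x in a..b, x ^ (k - 1) ≤ a ^ k / -k := by
  have h0 : (0 : ℝ) ∉ Set.uIcc a b := by
    rw [Set.uIcc_of_le hab]; exact fun h => ha.not_ge h.1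
  rw [integral_zpow (Or.inr ⟨by omega, h0⟩), sub_add_cancel]
  have hkR : (k : ℝ) < 0 := by exact_mod_cast hk
  rw [show ((k - 1 : ℤ) : ℝ) + 1 = k by push_cast; ring, ← neg_div_neg_eq, neg_sub]
  exact div_le_div_of_nonneg_right (sub_le_self _ (zpow_pos (ha.trans_le hab) k).le) (by linarith)

lemma sum_pow_add_two_le_of_weightTail_le {ι : Type*} {s : Finset ι} {w : ι → ℝ} {a b C : ℝ}
    (ha : 0 < a) (hab : a ≤ b) (hs : ∀ v ∈ s, a ≤ w v ∧ w v ≤ b) {p q : ℕ} (hpq : p + 2 ≤ q)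
    (htail : ∀ x ∈ Set.Icc a b, weightTail s w x ≤ C / x ^ q) :
    ∑ v ∈ s, w v ^ (p + 2) ≤ C * q / (q - (p + 1)) * a ^ ((p : ℤ) + 1 - q) := by
  set k : ℤ := p + 1 - q with hk_def
  have hk : k < 0 := by omega
  have hkR : (-k : ℝ) = q - (p + 1) := by push_cast [hk_def]; ring
  have hdiv_pow : ∀ x : ℝ, 0 < x → ∀ m : ℕ, x ^ m / x ^ q = x ^ ((m : ℤ) - q) := fun x hx m => by
    rw [← zpow_natCast, ← zpow_natCast, zpow_sub₀ hx.ne']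
  have hC : 0 ≤ C := by
    have hTa : 0 ≤ weightTail s w a :=
      sum_nonneg fun v hv => ha.le.trans (hs v (mem_filter.mp hv).1).1
    have := hTa.trans (htail a ⟨le_rfl, hab⟩)
    rwa [le_div_iff₀ (pow_pos ha q), zero_mul] at this
  have hfirst : a ^ (p + 1) * weightTail s w a ≤ C * a ^ k := by
    calc a ^ (p + 1) * weightTail s w a ≤ a ^ (p + 1) * (C / a ^ q) := by
          gcongr; exact htail a ⟨le_rfl, hab⟩
      _ = C * a ^ k := by
          rw [mul_div_left_comm, hdiv_pow a ha, hk_def]; push_cast; ring_nf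
  have hintegral : ∫ x in a..b, x ^ p * weightTail s w x ≤ C * (a ^ k / -k) := by
    calc ∫ x in a..b, x ^ p * weightTail s w x ≤ ∫ x in a..b, C * x ^ (k - 1) := by
          refine integral_mono_on hab (intervalIntegrable_pow_mul_weightTail s w p a b)
            (intervalIntegral.intervalIntegrable_zpow (Or.inr ?_) |>.const_mul C) fun x hx => ?_
          · rw [Set.uIcc_of_le hab]; exact fun h => ha.not_ge h.1
          have hx0 : 0 < x := ha.trans_le hx.1
          calc x ^ p * weightTail s w x ≤ x ^ p * (C / x ^ q) := by gcongr; exact htail x hx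
            _ = C * x ^ (k - 1) := by
                rw [mul_div_left_comm, hdiv_pow x hx0, hk_def]; ring_nf
      _ = C * ∫ x in a..b, x ^ (k - 1) := intervalIntegral.integral_const_mul _ _
      _ ≤ C * (a ^ k / -k) := by gcongr; exact integral_zpow_sub_one_le ha hab hk
  rw [sum_pow_add_two_eq hs]
  calc a ^ (p + 1) * weightTail s w a + (p + 1) * ∫ x in a..b, x ^ p * weightTail s w x
      ≤ C * a ^ k + (p + 1) * (C * (a ^ k / -k)) := by gcongr
    _ = C * q / (q - (p + 1)) * a ^ k := by
        rw [hkR]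
        have : (q : ℝ) - (p + 1) ≠ 0 := by rw [← hkR]; exact_mod_cast neg_ne_zero.mpr hk.ne
        field_simp
        ring

lemma div_sub_add_one_le_self {p q : ℕ} (hpq : p + 2 ≤ q) : (q : ℝ) / (q - (p + 1)) ≤ q := by
  have hpq' : (p : ℝ) + 2 ≤ q := by exact_mod_cast hpq
  exact div_le_self (by positivity) (by linarith)

section SizeBiasedTail

variable {ι : Type*} [Fintype ι] (w : ι → ℝ)

lemma weightTail_filter_Ico_eq {a x ψ : ℝ} (hax : a ≤ x) :
    weightTail (univ.filter fun v => a ≤ w v ∧ w v < ψ) w x =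
      ∑ v ∈ univ.filter (fun v => x ≤ w v ∧ w v < ψ), w v := by
  rw [weightTail, filter_filter]
  exact sum_congr (filter_congr fun v _ =>
    ⟨fun h => ⟨h.2, h.1.2⟩, fun h => ⟨⟨hax.trans h.1, h.2⟩, h.1⟩⟩) fun _ _ => rfl

lemma sum_filter_Ico_le_of_inv_mul_lt {W ψ C : ℝ} (hW : 0 < W) (hC : 0 ≤ C) {q : ℕ}
    (htail : ∀ y : ℝ, 0 < y → y < ψ →
      W⁻¹ * ∑ v ∈ univ.filter (fun v => y ≤ w v ∧ w v < ψ), w v < C / y ^ q)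
    {x : ℝ} (hx : 0 < x) :
    ∑ v ∈ univ.filter (fun v => x ≤ w v ∧ w v < ψ), w v ≤ W * C / x ^ q := by
  rcases lt_or_ge x ψ with hxψ | hψx
  · rw [mul_div_assoc]
    exact ((inv_mul_lt_iff₀ hW).mp (htail x hx hxψ)).le
  · rw [sum_eq_zero fun v hv =>
      absurd (mem_filter.mp hv).2 fun h => (h.1.trans_lt h.2).not_ge hψx]
    positivity

end SizeBiasedTail

theorem restricted_moment_upper_general {n : ℕ} (w : Fin n → ℝ)
    (W : ℝ) (hWpos : 0 < W)
    (r : ℕ) (hr : 2 ≤ r) (ψH : ℝ)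
    (htail : ∀ y : ℝ, 0 < y → y < ψH →
      W⁻¹ * ∑ v ∈ univ.filter (fun v => y ≤ w v ∧ w v < ψH), w v <
        2 * W ^ (r - 1) / y ^ (2 * r - 1))
    (ϑ : ℕ) (hϑ₁ : r ≤ ϑ) (hϑ₂ : ϑ ≤ 2 * r - 1) (a : ℝ) (ha : 0 < a) :
    ∑ v ∈ univ.filter (fun v => a ≤ w v ∧ w v < ψH), (w v) ^ ϑ ≤
      4 * r * W ^ r * a ^ ((ϑ : ℤ) - 2 * r) := by
  obtain ⟨p, rfl⟩ : ∃ p, ϑ = p + 2 := ⟨ϑ - 2, by omega⟩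
  have hWr : W * (2 * W ^ (r - 1)) = 2 * W ^ r := by
    rw [← Nat.sub_add_cancel (by omega : 1 ≤ r), pow_succ, Nat.add_sub_cancel]; ring
  -- integrating up to `max a ψH` rather than `ψH` avoids a case split on `a < ψH`
  have hbound := sum_pow_add_two_le_of_weightTail_le ha (le_max_left a ψH)
    (fun v hv => ⟨(mem_filter.mp hv).2.1, le_max_of_le_right (mem_filter.mp hv).2.2.le⟩)
    (by omega : p + 2 ≤ 2 * r - 1) fun x hx =>
      (weightTail_filter_Ico_eq w hx.1).trans_le
        (sum_filter_Ico_le_of_inv_mul_lt w hWpos (by positivity) htail (ha.trans_le hx.1))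
  have hq : ((2 * r - 1 : ℕ) : ℝ) ≤ 2 * r := by exact_mod_cast (by omega : 2 * r - 1 ≤ 2 * r)
  calc _ ≤ 2 * W ^ r * ((2 * r - 1 : ℕ) / ((2 * r - 1 : ℕ) - (p + 1))) *
          a ^ ((p : ℤ) + 1 - (2 * r - 1 : ℕ)) := by
        rwa [← hWr, ← mul_div_assoc]
    _ ≤ 2 * W ^ r * (2 * r) * a ^ (((p + 2 : ℕ) : ℤ) - 2 * r) := by
        rw [show (p : ℤ) + 1 - (2 * r - 1 : ℕ) = ((p + 2 : ℕ) : ℤ) - 2 * r by omega]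
        gcongr
        exact (div_sub_add_one_le_self (by omega)).trans hq
    _ = 4 * r * W ^ r * a ^ (((p + 2 : ℕ) : ℤ) - 2 * r) := by ring

/-- Proposition 4.3, second part: if the size-biased tail satisfies
`P[y ≤ Y < ψH] < 2 W^(r-1) / y^(2r-1)` for all `0 < y < ψH`, then for every integer
`ϑ` with `r ≤ ϑ ≤ 2r - 1` and every `a > 0`,
`∑_{a ≤ w_v < ψH} w_v^ϑ ≤ 4 r W^r a^(ϑ - 2r)`. -/
theorem restricted_moment_upper {n : ℕ} (w : Fin n → ℝ) (hpos : ∀ v, 0 < w v)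
    (W : ℝ) (hW : W = ∑ v, w v) (hWpos : 0 < W)
    (r : ℕ) (hr : 2 ≤ r) (ψH : ℝ) (hψ : 0 < ψH)
    (htail : ∀ y : ℝ, 0 < y → y < ψH →
      W⁻¹ * ∑ v ∈ univ.filter (fun v => y ≤ w v ∧ w v < ψH), w v <
        2 * W ^ (r - 1) / y ^ (2 * r - 1))
    (ϑ : ℕ) (hϑ₁ : r ≤ ϑ) (hϑ₂ : ϑ ≤ 2 * r - 1) (a : ℝ) (ha : 0 < a) :
    ∑ v ∈ univ.filter (fun v => a ≤ w v ∧ w v < ψH), (w v) ^ ϑ ≤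
      4 * r * W ^ r * a ^ ((ϑ : ℤ) - 2 * r) :=
  restricted_moment_upper_general w W hWpos r hr ψH htail ϑ hϑ₁ hϑ₂ a ha
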